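/- Fix an integer N ≥ 1, a positive integer K, real constants C1 and Csync, and a symmetric matrix J : Fin N → Fin N → ℝ. Let F : ℝ → ℝ be differentiable and even, set S = −F′, and define E(φ) = −(K·C1/2)·Σ_{i} Σ_{j ≠ i} J i j · F(φ i − φ j) − Csync·Σ_i cos(K·φ i) and V i (φ) = −C1·Σ_{j ≠ i} J i j · S(φ i − φ j) − Csync·sin(K·φ i). If φ : ℝ → (Fin N → ℝ) is differentiable and satisfies the oscillator dynamics (φ i)′(t) = V i (φ(t)) for all t and all i, then for every t the derivative of t ↦ E(φ(t)) exists and equals −K·Σ_i ((φ i)′(t))², which is ≤ 0. -/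

import Mathlib

/-! Differentiating the pair energy along a trajectory gives, for each ordered pair `(a, b)`,
the term `J a b · F'(φ a - φ b) · (φ̇ a - φ̇ b)`. Since `J` is symmetric and `F'` is odd
(as `F` is even), the coefficient `J a b · F'(φ a - φ b)` is antisymmetric, so the pair sum
collapses to `2 Σ_a φ̇ a Σ_{b ≠ a} J a b F'(φ a - φ b)`. Together with the pinning term this is
`-K Σ_a φ̇ a · V a(φ) = -K Σ_a φ̇ a ²`: the dynamics is the gradient flow of `E / K`. -/

open Finset

theorem Function.Even.deriv {𝕜 E : Type*} [NontriviallyNormedField 𝕜] [NormedAddCommGroup E]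
    [NormedSpace 𝕜 E] {f : 𝕜 → E} (hf : f.Even) : (deriv f).Odd := by
  intro x
  have h := deriv_comp_neg f x
  rw [funext hf] at h
  rw [h, neg_neg]

theorem Finset.sum_sum_erase_mul_sub_of_antisymm {ι R : Type*} [Fintype ι] [DecidableEq ι]
    [CommRing R] {P : ι → ι → R} (hP : ∀ a b, P b a = -P a b) (d : ι → R) :
    ∑ a, ∑ b ∈ univ.erase a, P a b * (d a - d b) = 2 * ∑ a, d a * ∑ b ∈ univ.erase a, P a b := by
  have hswap : ∑ a, ∑ b ∈ univ.erase a, P a b * d b = -∑ a, d a * ∑ b ∈ univ.erase a, P a b := by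
    rw [sum_comm' (t' := univ) (s' := fun b => univ.erase b) (by simp [eq_comm])]
    simp only [mul_sum, ← sum_neg_distrib]
    refine sum_congr rfl fun b _ => sum_congr rfl fun a _ => ?_
    rw [hP]
    ring
  have hdiag : ∑ a, ∑ b ∈ univ.erase a, P a b * d a = ∑ a, d a * ∑ b ∈ univ.erase a, P a b := by
    simp only [mul_sum, mul_comm]
  simp only [mul_sub, sum_sub_distrib, hswap, hdiag]
  ring

section Trajectory

variable {ι : Type*} [Fintype ι] {φ : ℝ → ι → ℝ} {t : ℝ}

theorem hasDerivAt_sum_sum_erase_pairPotential [DecidableEq ι] {J : ι → ι → ℝ}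
    (hJ : ∀ i j, J i j = J j i) {F : ℝ → ℝ} (hF : Differentiable ℝ F) (hFeven : F.Even)
    (hφ : DifferentiableAt ℝ φ t) :
    HasDerivAt (fun s => ∑ a, ∑ b ∈ univ.erase a, J a b * F (φ s a - φ s b))
      (2 * ∑ a, deriv (fun s => φ s a) t *
        ∑ b ∈ univ.erase a, J a b * deriv F (φ t a - φ t b)) t := by
  have hcoord (i : ι) : HasDerivAt (fun s => φ s i) (deriv (fun s => φ s i) t) t :=
    (differentiableAt_pi.mp hφ i).hasDerivAt
  have hpair (a b : ι) : HasDerivAt (fun s => J a b * F (φ s a - φ s b))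
      (J a b * deriv F (φ t a - φ t b) *
        (deriv (fun s => φ s a) t - deriv (fun s => φ s b) t)) t :=
    (((hF _).hasDerivAt.comp t ((hcoord a).sub (hcoord b))).const_mul (J a b)).congr_deriv
      (mul_assoc _ _ _).symm
  have hantisymm (a b : ι) : J b a * deriv F (φ t b - φ t a)
      = -(J a b * deriv F (φ t a - φ t b)) := by
    rw [hJ b a, ← neg_sub, hFeven.deriv, mul_neg]
  rw [← sum_sum_erase_mul_sub_of_antisymm hantisymm]
  exact HasDerivAt.fun_sum fun a _ => HasDerivAt.fun_sum fun b _ => hpair a b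

theorem hasDerivAt_sum_cos_mul (k : ℝ) (hφ : DifferentiableAt ℝ φ t) :
    HasDerivAt (fun s => ∑ a, Real.cos (k * φ s a))
      (-k * ∑ a, Real.sin (k * φ t a) * deriv (fun s => φ s a) t) t := by
  rw [mul_sum]
  refine HasDerivAt.fun_sum fun a _ => ?_
  exact (((differentiableAt_pi.mp hφ a).hasDerivAt).const_mul k).cos.congr_deriv (by ring)

end Trajectory

theorem stmt_1_general (N : ℕ) (K : ℕ) (C1 Csync : ℝ)
    (J : Fin N → Fin N → ℝ) (hJ : ∀ i j, J i j = J j i)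
    (F : ℝ → ℝ) (hF : Differentiable ℝ F) (hFeven : ∀ x, F (-x) = F x)
    (S : ℝ → ℝ) (hS : ∀ x, S x = -(deriv F x))
    (E : (Fin N → ℝ) → ℝ)
    (hE : ∀ φ : Fin N → ℝ, E φ =
      -((K : ℝ) * C1 / 2) * ∑ a, ∑ b ∈ Finset.univ.erase a, J a b * F (φ a - φ b)
        - Csync * ∑ a, Real.cos ((K : ℝ) * φ a))
    (V : Fin N → (Fin N → ℝ) → ℝ)
    (hV : ∀ (i : Fin N) (ψ : Fin N → ℝ), V i ψ =
      -C1 * ∑ j ∈ Finset.univ.erase i, J i j * S (ψ i - ψ j)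
        - Csync * Real.sin ((K : ℝ) * ψ i))
    (φ : ℝ → Fin N → ℝ) (hφ : Differentiable ℝ φ)
    (hdyn : ∀ (t : ℝ) (i : Fin N), deriv (fun s => φ s i) t = V i (φ t))
    (t : ℝ) :
    HasDerivAt (fun s => E (φ s))
      (-(K : ℝ) * ∑ i, (deriv (fun s => φ s i) t) ^ 2) t ∧
    -(K : ℝ) * ∑ i, (deriv (fun s => φ s i) t) ^ 2 ≤ 0 := by
  have hvel (i : Fin N) : deriv (fun s => φ s i) t
      = C1 * ∑ j ∈ univ.erase i, J i j * deriv F (φ t i - φ t j) - Csync * Real.sin (K * φ t i) := by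
    rw [hdyn, hV]
    simp only [hS, mul_neg, sum_neg_distrib]
    ring
  have hderiv := ((hasDerivAt_sum_sum_erase_pairPotential hJ hF hFeven (hφ t)).const_mul
    (-((K : ℝ) * C1 / 2))).sub ((hasDerivAt_sum_cos_mul K (hφ t)).const_mul Csync)
  refine ⟨?_, mul_nonpos_of_nonpos_of_nonneg (by simp) (by positivity)⟩
  rw [show (fun s => E (φ s)) = _ from funext fun s => hE (φ s)]
  refine hderiv.congr_deriv ?_
  have hsq : ∑ i, deriv (fun s => φ s i) t ^ 2
      = C1 * ∑ a, deriv (fun s => φ s a) t * ∑ b ∈ univ.erase a, J a b * deriv F (φ t a - φ t b)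
        - Csync * ∑ a, Real.sin (K * φ t a) * deriv (fun s => φ s a) t := by
    rw [mul_sum, mul_sum, ← sum_sub_distrib]
    exact sum_congr rfl fun i _ => by
      linear_combination deriv (fun s => φ s i) t * hvel i
  rw [hsq]
  ring

/-- along any trajectory of the oscillator dynamics, the derivative of
`t ↦ E(φ(t))` exists and equals `−K·Σ_i ((φ i)′(t))²`, which is `≤ 0`. -/
theorem stmt_1 (N : ℕ) (hN : 1 ≤ N) (K : ℕ) (hK : 0 < K) (C1 Csync : ℝ)
    (J : Fin N → Fin N → ℝ) (hJ : ∀ i j, J i j = J j i)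
    (F : ℝ → ℝ) (hF : Differentiable ℝ F) (hFeven : ∀ x, F (-x) = F x)
    (S : ℝ → ℝ) (hS : ∀ x, S x = -(deriv F x))
    (E : (Fin N → ℝ) → ℝ)
    (hE : ∀ φ : Fin N → ℝ, E φ =
      -((K : ℝ) * C1 / 2) * ∑ a, ∑ b ∈ Finset.univ.erase a, J a b * F (φ a - φ b)
        - Csync * ∑ a, Real.cos ((K : ℝ) * φ a))
    (V : Fin N → (Fin N → ℝ) → ℝ)
    (hV : ∀ (i : Fin N) (ψ : Fin N → ℝ), V i ψ =
      -C1 * ∑ j ∈ Finset.univ.erase i, J i j * S (ψ i - ψ j)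
        - Csync * Real.sin ((K : ℝ) * ψ i))
    (φ : ℝ → Fin N → ℝ) (hφ : Differentiable ℝ φ)
    (hdyn : ∀ (t : ℝ) (i : Fin N), deriv (fun s => φ s i) t = V i (φ t))
    (t : ℝ) :
    HasDerivAt (fun s => E (φ s))
      (-(K : ℝ) * ∑ i, (deriv (fun s => φ s i) t) ^ 2) t ∧
    -(K : ℝ) * ∑ i, (deriv (fun s => φ s i) t) ^ 2 ≤ 0 :=
  stmt_1_general N K C1 Csync J hJ F hF hFeven S hS E hE V hV φ hφ hdyn t
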